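/- arXiv:math/0502193 — 2 statements merged into one kernel-verified Lean document; each statement's English description precedes it below -/
import Mathlib

section
/- Let P(x,y) be a complex Laurent polynomial in two variables and let M = max_{|x|=|y|=1} |P(x,y)|. For every complex number t with |t| > M, the Mahler measure of F_t := t - P satisfies M(F_t) = |Q(t)|^{-1}, where Q(t) := t^{-1} exp( Σ_{n≥1} c_n t^{-n}/n ) and c_n is the constant term of the Laurent polynomial P^n (the series converging absolutely). -/
/-- Evaluation of a Laurent polynomial in two variables (an element of the group algebra
`ℂ[ℤ × ℤ]`) at a point `(x, y)` with `x, y ≠ 0`. -/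
noncomputable def lpEval (P : AddMonoidAlgebra ℂ (ℤ × ℤ)) (x y : ℂ) : ℂ :=
  ∑ m ∈ P.coeff.support, P.coeff m * x ^ m.1 * y ^ m.2

open Complex intervalIntegral
open scoped Real

/-! For `‖z‖ < ‖t‖` one has `log ‖t - z‖ = log ‖t‖ - Re ∑ (z / t) ^ (n + 1) / (n + 1)`. On the
torus `‖P‖ ≤ M < ‖t‖`, so this series in `z = P(x, y)` converges uniformly there and may be
integrated term by term. Since `P(x, y) ^ n = P ^ n (x, y)` and the integral of a Laurent polynomial
over the torus is `(2π)²` times its constant term, the `n`-th term integrates to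
`(2π)² Re (c_n t⁻ⁿ / n)`; integrating `‖P ^ n‖ ≤ M ^ n` also gives `‖c_n‖ ≤ M ^ n`, whence the
absolute convergence. -/

section IteratedIntegral

variable {E : Type*} [NormedAddCommGroup E] [NormedSpace ℝ E]

lemma hasSum_intervalIntegral_of_norm_le {ι : Type*} [Countable ι] {F : ι → ℝ → E} {G : ℝ → E}
    {u : ι → ℝ} (hF : ∀ n, Continuous (F n)) (hFu : ∀ n x, ‖F n x‖ ≤ u n) (hu : Summable u)
    (hG : ∀ x, HasSum (F · x) (G x)) (a b : ℝ) :
    HasSum (fun n => ∫ x in a..b, F n x) (∫ x in a..b, G x) :=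
  hasSum_integral_of_dominated_convergence (fun n _ => u n)
    (fun n => (hF n).aestronglyMeasurable) (fun n => .of_forall fun x _ => hFu n x)
    (.of_forall fun _ _ => hu) intervalIntegrable_const (.of_forall fun x _ => hG x)

lemma hasSum_integral_integral_of_norm_le {ι : Type*} [Countable ι] {F : ι → ℝ → ℝ → E}
    {G : ℝ → ℝ → E} {u : ι → ℝ} (hF : ∀ n, Continuous (Function.uncurry (F n)))
    (hFu : ∀ n x y, ‖F n x y‖ ≤ u n) (hu : Summable u) (hG : ∀ x y, HasSum (F · x y) (G x y))
    (a b c d : ℝ) :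
    HasSum (fun n => ∫ x in a..b, ∫ y in c..d, F n x y) (∫ x in a..b, ∫ y in c..d, G x y) :=
  hasSum_intervalIntegral_of_norm_le
    (fun n => continuous_parametric_intervalIntegral_of_continuous' (hF n) c d)
    (fun n x => norm_integral_le_of_norm_le_const fun y _ => hFu n x y) (hu.mul_right _)
    (fun x => hasSum_intervalIntegral_of_norm_le (fun n => (hF n).comp (.prodMk_right x))
      (fun n => hFu n x) hu (hG x) c d) a b

lemma norm_integral_integral_le {f : ℝ → ℝ → E} {C : ℝ} (hf : ∀ x y, ‖f x y‖ ≤ C)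
    (a b c d : ℝ) :
    ‖∫ x in a..b, ∫ y in c..d, f x y‖ ≤ C * |d - c| * |b - a| :=
  norm_integral_le_of_norm_le_const fun x _ => norm_integral_le_of_norm_le_const fun y _ => hf x y

lemma integral_integral_const_sub [CompleteSpace E] {g : ℝ → ℝ → E}
    (hg : Continuous (Function.uncurry g)) (k : E) (a b c d : ℝ) :
    ∫ x in a..b, ∫ y in c..d, (k - g x y)
      = (b - a) • (d - c) • k - ∫ x in a..b, ∫ y in c..d, g x y := by
  have hinner (x : ℝ) : ∫ y in c..d, (k - g x y) = (d - c) • k - ∫ y in c..d, g x y := by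
    have hgx : Continuous (g x) := hg.comp (.prodMk_right x)
    rw [integral_sub intervalIntegrable_const (hgx.intervalIntegrable c d), integral_const]
  simp only [hinner]
  rw [integral_sub intervalIntegrable_const
    ((continuous_parametric_intervalIntegral_of_continuous' hg c d).intervalIntegrable a b),
    integral_const]

lemma integral_integral_finsetSum {ι : Type*} (s : Finset ι) {f : ι → ℝ → ℝ → E}
    (hf : ∀ i ∈ s, Continuous (Function.uncurry (f i))) (a b c d : ℝ) :
    ∫ x in a..b, ∫ y in c..d, ∑ i ∈ s, f i x y = ∑ i ∈ s, ∫ x in a..b, ∫ y in c..d, f i x y := by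
  have hinner : ∀ i ∈ s, ∀ x, Continuous (f i x) := fun i hi x =>
    (hf i hi).comp (.prodMk_right x)
  rw [← integral_finsetSum fun i hi =>
    (continuous_parametric_intervalIntegral_of_continuous' (hf i hi) c d).intervalIntegrable a b]
  exact integral_congr fun x _ =>
    integral_finsetSum fun i hi => (hinner i hi x).intervalIntegrable c d

end IteratedIntegral

lemma integral_integral_re {𝕜 : Type*} [RCLike 𝕜] {f : ℝ → ℝ → 𝕜}
    (hf : Continuous (Function.uncurry f)) (a b c d : ℝ) :
    ∫ x in a..b, ∫ y in c..d, RCLike.re (f x y) = RCLike.re (∫ x in a..b, ∫ y in c..d, f x y) := by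
  calc ∫ x in a..b, ∫ y in c..d, RCLike.re (f x y)
      = ∫ x in a..b, RCLike.re (∫ y in c..d, f x y) := integral_congr fun x _ =>
        intervalIntegral_re ((hf.comp (.prodMk_right x)).intervalIntegrable c d)
    _ = _ := intervalIntegral_re
        ((continuous_parametric_intervalIntegral_of_continuous' hf c d).intervalIntegrable a b)

lemma integral_integral_mul {𝕜 : Type*} [RCLike 𝕜] (f g : ℝ → 𝕜) (a b c d : ℝ) :
    ∫ x in a..b, ∫ y in c..d, f x * g y = (∫ x in a..b, f x) * ∫ y in c..d, g y := by
  simp only [integral_const_mul, integral_mul_const]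

lemma integral_exp_mul_I_zpow (k : ℤ) :
    ∫ θ in (0:ℝ)..2 * π, exp (θ * I) ^ k = if k = 0 then (2 * π : ℂ) else 0 := by
  simp only [← exp_int_mul, show ∀ θ : ℝ, (k : ℂ) * (θ * I) = (k * I) * θ from fun _ => by ring]
  split_ifs with hk
  · simp [hk]
  · rw [integral_exp_mul_complex (by simp [hk, I_ne_zero]),
      show (k : ℂ) * I * ↑(2 * π) = k * (2 * π * I) by push_cast; ring, exp_int_mul_two_pi_mul_I]
    simp

def laurentChar (x y : ℂˣ) : Multiplicative (ℤ × ℤ) →* ℂˣ :=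
  MonoidHom.mk' (fun m => x ^ m.toAdd.1 * y ^ m.toAdd.2) fun a b => by
    simp only [toAdd_mul, Prod.fst_add, Prod.snd_add, zpow_add, mul_mul_mul_comm]

lemma lpEval_eq_lift (x y : ℂˣ) (Q : AddMonoidAlgebra ℂ (ℤ × ℤ)) :
    lpEval Q x y
      = AddMonoidAlgebra.lift ℂ ℂ (ℤ × ℤ) ((Units.coeHom ℂ).comp (laurentChar x y)) Q := by
  simp [AddMonoidAlgebra.lift_apply, Finsupp.sum, lpEval, laurentChar, mul_assoc]

lemma lpEval_pow {x y : ℂ} (hx : x ≠ 0) (hy : y ≠ 0) (Q : AddMonoidAlgebra ℂ (ℤ × ℤ)) (k : ℕ) :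
    lpEval (Q ^ k) x y = lpEval Q x y ^ k := by
  have h := lpEval_eq_lift (.mk0 x hx) (.mk0 y hy)
  simp only [Units.val_mk0] at h
  rw [h, h, map_pow]

lemma norm_lpEval_le {x y : ℂ} (hx : ‖x‖ = 1) (hy : ‖y‖ = 1) (Q : AddMonoidAlgebra ℂ (ℤ × ℤ)) :
    ‖lpEval Q x y‖ ≤ ∑ m ∈ Q.coeff.support, ‖Q.coeff m‖ :=
  (norm_sum_le _ _).trans_eq (Finset.sum_congr rfl fun m _ => by simp [hx, hy])

noncomputable def torusEval (Q : AddMonoidAlgebra ℂ (ℤ × ℤ)) (θ φ : ℝ) : ℂ :=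
  lpEval Q (exp (θ * I)) (exp (φ * I))

lemma continuous_torusEval (Q : AddMonoidAlgebra ℂ (ℤ × ℤ)) :
    Continuous (Function.uncurry (torusEval Q)) := by
  unfold torusEval lpEval
  fun_prop (disch := simp)

lemma torusEval_pow (Q : AddMonoidAlgebra ℂ (ℤ × ℤ)) (k : ℕ) (θ φ : ℝ) :
    torusEval (Q ^ k) θ φ = torusEval Q θ φ ^ k :=
  lpEval_pow (exp_ne_zero _) (exp_ne_zero _) Q k

lemma norm_torusEval_le_sSup (Q : AddMonoidAlgebra ℂ (ℤ × ℤ)) (θ φ : ℝ) :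
    ‖torusEval Q θ φ‖ ≤ sSup {r : ℝ | ∃ x y : ℂ, ‖x‖ = 1 ∧ ‖y‖ = 1 ∧ r = ‖lpEval Q x y‖} :=
  le_csSup ⟨_, by rintro _ ⟨x, y, hx, hy, rfl⟩; exact norm_lpEval_le hx hy Q⟩
    ⟨_, _, norm_exp_ofReal_mul_I θ, norm_exp_ofReal_mul_I φ, rfl⟩

lemma integral_integral_torusEval (Q : AddMonoidAlgebra ℂ (ℤ × ℤ)) :
    ∫ θ in (0:ℝ)..2 * π, ∫ φ in (0:ℝ)..2 * π, torusEval Q θ φ = (2 * π) ^ 2 * Q.coeff 0 := by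
  unfold torusEval lpEval
  rw [integral_integral_finsetSum _ (fun m _ => by fun_prop (disch := simp))]
  have hterm (m : ℤ × ℤ) : ∫ θ in (0:ℝ)..2 * π, ∫ φ in (0:ℝ)..2 * π,
      Q.coeff m * exp (θ * I) ^ m.1 * exp (φ * I) ^ m.2
        = Q.coeff m *
          ((if m.1 = 0 then (2 * π : ℂ) else 0) * if m.2 = 0 then (2 * π : ℂ) else 0) := by
    rw [integral_integral_mul (fun θ : ℝ => Q.coeff m * exp (θ * I) ^ m.1), integral_const_mul,
      integral_exp_mul_I_zpow, integral_exp_mul_I_zpow, mul_assoc]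
  simp only [hterm]
  rw [Finset.sum_eq_single (0 : ℤ × ℤ)]
  · simp only [Prod.fst_zero, Prod.snd_zero, if_true]
    ring
  · rintro ⟨m₁, m₂⟩ _ hm
    by_cases h₁ : m₁ = 0
    · simp_all
    · simp [h₁]
  · simp

lemma norm_coeff_zero_le_of_norm_torusEval_le (Q : AddMonoidAlgebra ℂ (ℤ × ℤ)) {C : ℝ}
    (hC : ∀ θ φ, ‖torusEval Q θ φ‖ ≤ C) : ‖Q.coeff 0‖ ≤ C := by
  have h := norm_integral_integral_le hC 0 (2 * π) 0 (2 * π)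
  rw [integral_integral_torusEval, norm_mul, norm_pow, norm_mul, Complex.norm_ofNat, norm_real,
    Real.norm_of_nonneg Real.pi_pos.le, sub_zero, abs_of_pos Real.two_pi_pos] at h
  exact le_of_mul_le_mul_left (h.trans_eq (by ring)) (by positivity)

lemma hasSum_re_log_series {z t : ℂ} (hz : ‖z‖ < ‖t‖) :
    HasSum (fun n : ℕ => (z ^ (n + 1) * t ^ (-((n : ℤ) + 1)) / ((n : ℂ) + 1)).re)
      (Real.log ‖t‖ - Real.log ‖t - z‖) := by
  have ht : 0 < ‖t‖ := (norm_nonneg z).trans_lt hz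
  have hzt : ‖z / t‖ < 1 := by rwa [norm_div, div_lt_one ht]
  have h1 : 1 - z / t ≠ 0 := fun h => by
    rw [← eq_of_sub_eq_zero h, norm_one] at hzt
    exact lt_irrefl _ hzt
  have hlog : (-log (1 - z / t)).re = Real.log ‖t‖ - Real.log ‖t - z‖ := by
    rw [neg_re, log_re, show t - z = t * (1 - z / t) by
      rw [mul_sub, mul_one, mul_div_cancel₀ _ (norm_pos_iff.mp ht)], norm_mul,
      Real.log_mul ht.ne' (norm_ne_zero_iff.mpr h1)]
    ring
  rw [← hlog]
  refine hasSum_re ((hasSum_taylorSeries_neg_log' hzt).congr_fun fun n => ?_)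
  rw [show -((n : ℤ) + 1) = -((n + 1 : ℕ) : ℤ) by push_cast; ring, zpow_neg, zpow_natCast, div_pow,
    div_eq_mul_inv (z ^ _)]

lemma norm_mul_zpow_div_le {w t : ℂ} {M : ℝ} (n : ℕ) (hw : ‖w‖ ≤ M ^ (n + 1)) :
    ‖w * t ^ (-((n : ℤ) + 1)) / ((n : ℂ) + 1)‖ ≤ (M / ‖t‖) ^ (n + 1) := by
  have hn : 1 ≤ ‖(n : ℂ) + 1‖ := by norm_cast; simp
  rw [norm_div, norm_mul, norm_zpow, show -((n : ℤ) + 1) = -((n + 1 : ℕ) : ℤ) by push_cast; ring,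
    zpow_neg, zpow_natCast, div_pow, ← div_eq_mul_inv]
  exact (div_le_self (by positivity) hn).trans (div_le_div_of_nonneg_right hw (by positivity))

lemma summable_div_pow_succ {M T : ℝ} (hM : 0 ≤ M) (hMT : M < T) :
    Summable fun n : ℕ => (M / T) ^ (n + 1) :=
  (summable_nat_add_iff 1).mpr <| summable_geometric_of_lt_one (div_nonneg hM (hM.trans hMT.le))
    ((div_lt_one (hM.trans_lt hMT)).mpr hMT)

noncomputable def mahlerTerm (P : AddMonoidAlgebra ℂ (ℤ × ℤ)) (t : ℂ) (n : ℕ) : ℂ :=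
  (P ^ (n + 1)).coeff 0 * t ^ (-((n : ℤ) + 1)) / ((n : ℂ) + 1)

section MahlerSeries

variable (P : AddMonoidAlgebra ℂ (ℤ × ℤ)) {t : ℂ} {M : ℝ}

lemma summable_norm_mahlerTerm (hPM : ∀ θ φ, ‖torusEval P θ φ‖ ≤ M) (hMt : M < ‖t‖) :
    Summable fun n => ‖mahlerTerm P t n‖ := by
  refine (summable_div_pow_succ ((norm_nonneg _).trans (hPM 0 0)) hMt).of_nonneg_of_le (fun _ => norm_nonneg _)
    fun n => norm_mul_zpow_div_le n <| norm_coeff_zero_le_of_norm_torusEval_le _ fun θ φ => ?_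
  rw [torusEval_pow, norm_pow]
  exact pow_le_pow_left₀ (norm_nonneg _) (hPM θ φ) _

lemma integral_integral_re_torusEval_pow_mul (n : ℕ) :
    ∫ θ in (0:ℝ)..2 * π, ∫ φ in (0:ℝ)..2 * π,
      (torusEval P θ φ ^ (n + 1) * t ^ (-((n : ℤ) + 1)) / ((n : ℂ) + 1)).re
        = (2 * π) ^ 2 * (mahlerTerm P t n).re := by
  have hcont : Continuous (Function.uncurry fun θ φ =>
      torusEval P θ φ ^ (n + 1) * t ^ (-((n : ℤ) + 1)) / ((n : ℂ) + 1)) :=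
    ((continuous_torusEval P).pow (n + 1)).mul continuous_const |>.div_const _
  have h := integral_integral_re hcont 0 (2 * π) 0 (2 * π)
  simp only [RCLike.re_to_complex] at h
  rw [h]
  simp only [integral_div, integral_mul_const, ← torusEval_pow, integral_integral_torusEval]
  rw [show (2 * π : ℂ) ^ 2 * (P ^ (n + 1)).coeff 0 * t ^ (-((n : ℤ) + 1)) / ((n : ℂ) + 1)
    = ((2 * π) ^ 2 : ℝ) * mahlerTerm P t n by unfold mahlerTerm; push_cast; ring, re_ofReal_mul]

lemma integral_integral_log_norm_sub_torusEval (hPM : ∀ θ φ, ‖torusEval P θ φ‖ ≤ M)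
    (hMt : M < ‖t‖) :
    ∫ θ in (0:ℝ)..2 * π, ∫ φ in (0:ℝ)..2 * π, Real.log ‖t - torusEval P θ φ‖
      = (2 * π) ^ 2 * (Real.log ‖t‖ - (∑' n, mahlerTerm P t n).re) := by
  have hsum := summable_norm_mahlerTerm P hPM hMt
  have hlogcont : Continuous (Function.uncurry fun θ φ => Real.log ‖t - torusEval P θ φ‖) :=
    (continuous_const.sub (continuous_torusEval P)).norm.log fun p => norm_ne_zero_iff.mpr <|
      sub_ne_zero.mpr <| ne_of_apply_ne norm ((hPM p.1 p.2).trans_lt hMt).ne'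
  have hlog := hasSum_integral_integral_of_norm_le
    (F := fun n θ φ => (torusEval P θ φ ^ (n + 1) * t ^ (-((n : ℤ) + 1)) / ((n : ℂ) + 1)).re)
    (fun n => by
      exact continuous_re.comp
        (((continuous_torusEval P).pow _).mul continuous_const |>.div_const _))
    (fun n θ φ => (abs_re_le_norm _).trans <| norm_mul_zpow_div_le n <| by
      rw [norm_pow]; exact pow_le_pow_left₀ (norm_nonneg _) (hPM θ φ) _)
    (summable_div_pow_succ ((norm_nonneg _).trans (hPM 0 0)) hMt)
    (fun θ φ => hasSum_re_log_series ((hPM θ φ).trans_lt hMt)) 0 (2 * π) 0 (2 * π)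
  rw [integral_integral_const_sub hlogcont] at hlog
  simp only [integral_integral_re_torusEval_pow_mul, smul_eq_mul, sub_zero] at hlog
  linear_combination -(hlog.unique ((hasSum_re hsum.of_norm.hasSum).mul_left ((2 * π) ^ 2)))

end MahlerSeries

/-- For a two-variable complex Laurent polynomial `P` and `t ∈ ℂ` with
`|t| > M = max_{|x|=|y|=1} |P(x,y)|`, the Mahler measure `M(F_t) = exp(m(F_t))` of
`F_t = t - P` equals `|Q(t)|⁻¹`, where `Q(t) = t⁻¹ exp(Σ_{n≥1} c_n t^{-n}/n)` and `c_n`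
is the constant term of `P^n` (the series converging absolutely). -/
theorem stmt1 (P : AddMonoidAlgebra ℂ (ℤ × ℤ)) (t : ℂ)
    (ht : sSup {r : ℝ | ∃ x y : ℂ, ‖x‖ = 1 ∧ ‖y‖ = 1 ∧ r = ‖lpEval P x y‖} < ‖t‖) :
    Summable (fun n : ℕ =>
      ‖(P ^ (n + 1)).coeff (0 : ℤ × ℤ) * t ^ (-((n : ℤ) + 1)) / ((n : ℂ) + 1)‖) ∧
    Real.exp ((1 / (2 * Real.pi) ^ 2) *
        ∫ θ in (0:ℝ)..(2 * Real.pi), ∫ φ in (0:ℝ)..(2 * Real.pi),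
          Real.log ‖t - lpEval P (Complex.exp (θ * Complex.I)) (Complex.exp (φ * Complex.I))‖)
      = ‖t⁻¹ * Complex.exp
          (∑' n : ℕ, (P ^ (n + 1)).coeff (0 : ℤ × ℤ) * t ^ (-((n : ℤ) + 1)) / ((n : ℂ) + 1))‖⁻¹ := by
  have hPM := norm_torusEval_le_sSup P
  have htpos : 0 < ‖t‖ := (norm_nonneg _).trans_lt ((hPM 0 0).trans_lt ht)
  refine ⟨summable_norm_mahlerTerm P hPM ht, ?_⟩
  change Real.exp (1 / (2 * π) ^ 2 * ∫ θ in (0:ℝ)..2 * π, ∫ φ in (0:ℝ)..2 * π,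
    Real.log ‖t - torusEval P θ φ‖) = ‖t⁻¹ * exp (∑' n, mahlerTerm P t n)‖⁻¹
  rw [integral_integral_log_norm_sub_torusEval P hPM ht, one_div,
    inv_mul_cancel_left₀ (by positivity), Real.exp_sub, Real.exp_log htpos, norm_mul, norm_inv,
    norm_exp, mul_inv, inv_inv, div_eq_mul_inv]
end

section
/- The Franel numbers u_m = Σ_{k=0}^{m} C(m,k)^3 satisfy, for all m ≥ 1, the recurrence (m+1)^2 u_{m+1} - (7 m^2 + 7 m + 2) u_m - 8 m^2 u_{m-1} = 0, and (1)^2 u_1 = 2 u_0; that is, they satisfy the recurrence (m+1)^2 u_{m+1} - (A m^2 + A m + λ) u_m + B m^2 u_{m-1} = 0 with (A, B, λ) = (7, -8, 2). -/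
/-!
Creative telescoping (Zeilberger's algorithm). With `F n k = C(n,k)³`, the summand of the
shifted recurrence is a telescoping difference in `k`,
`(n+2)² F(n+2,k) - (7n²+21n+16) F(n+1,k) - 8(n+1)² F(n,k) = G(n,k+1) - G(n,k)`,
for the explicit certificate `G = R · F(n+2,·)` with `R` rational in `n, k`.
Summing over `k` and using `G(n,0) = G(n,n+3) = 0` gives the recurrence.
-/

open Finset

section ChooseCast

variable {R : Type*} [Ring R]

/-- Unlike `Nat.choose_succ_right_eq`, there is no truncated subtraction here. -/
theorem Nat.cast_choose_succ_right_mul (n k : ℕ) :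
    (n.choose (k + 1) : R) * (k + 1) = n.choose k * ((n : R) - k) := by
  rcases le_or_gt k n with hk | hk
  · have h := congrArg (Nat.cast : ℕ → R) (Nat.choose_succ_right_eq n k)
    push_cast [Nat.cast_sub hk] at h
    exact h
  · simp [Nat.choose_eq_zero_of_lt hk, Nat.choose_eq_zero_of_lt (Nat.lt_succ_of_lt hk)]

theorem Nat.cast_choose_mul_succ (n k : ℕ) :
    (n.choose k : R) * (n + 1) = (n + 1).choose k * ((n : R) + 1 - k) := by
  rcases le_or_gt k (n + 1) with hk | hk
  · have h := congrArg (Nat.cast : ℕ → R) (Nat.choose_mul_succ_eq n k)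
    push_cast [Nat.cast_sub hk] at h
    exact h
  · simp [Nat.choose_eq_zero_of_lt hk, Nat.choose_eq_zero_of_lt (Nat.lt_of_succ_lt hk)]

end ChooseCast

def franel (n : ℕ) : ℚ :=
  ∑ k ∈ range (n + 1), (n.choose k : ℚ) ^ 3

/-- The certificate produced by Zeilberger's algorithm for the summand `C(n,k)³`. -/
def franelCertificate (n k : ℕ) : ℚ :=
  ((n + 2).choose k : ℚ) ^ 3 * (k : ℚ) ^ 3 *
    (4 * (k : ℚ) ^ 3 - 6 * (3 * (n : ℚ) + 5) * (k : ℚ) ^ 2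
      + 3 * ((n : ℚ) + 2) * (9 * (n : ℚ) + 13) * (k : ℚ)
      - 2 * ((n : ℚ) + 2) ^ 2 * (7 * (n : ℚ) + 9))
    / (((n : ℚ) + 1) * ((n : ℚ) + 2) ^ 3)

theorem franelCertificate_zero (n : ℕ) : franelCertificate n 0 = 0 := by
  simp [franelCertificate]

theorem franelCertificate_of_lt {n k : ℕ} (hk : n + 2 < k) : franelCertificate n k = 0 := by
  simp [franelCertificate, Nat.choose_eq_zero_of_lt hk]

/-- All three binomials are rational multiples of `C(n+2,k)`, which reduces the identity to
one in `ℚ(n,k)`. -/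
theorem franel_summand_telescopes (n k : ℕ) :
    ((n : ℚ) + 2) ^ 2 * ((n + 2).choose k : ℚ) ^ 3
      - (7 * (n : ℚ) ^ 2 + 21 * n + 16) * ((n + 1).choose k : ℚ) ^ 3
      - 8 * ((n : ℚ) + 1) ^ 2 * (n.choose k : ℚ) ^ 3
    = franelCertificate n (k + 1) - franelCertificate n k := by
  have hn1 : (n : ℚ) + 1 ≠ 0 := by positivity
  have hn2 : (n : ℚ) + 2 ≠ 0 := by positivity
  have hk1 : (k : ℚ) + 1 ≠ 0 := by positivity
  have h₀ : (n.choose k : ℚ) = ((n + 1).choose k) * ((n : ℚ) + 1 - k) / ((n : ℚ) + 1) := by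
    rw [eq_div_iff hn1, Nat.cast_choose_mul_succ]
  have h₁ : ((n + 1).choose k : ℚ)
      = ((n + 2).choose k) * ((n : ℚ) + 2 - k) / ((n : ℚ) + 2) := by
    have h : ((n + 1).choose k : ℚ) * ((n + 1 : ℕ) + 1)
        = (n + 2).choose k * (((n + 1 : ℕ) : ℚ) + 1 - k) :=
      Nat.cast_choose_mul_succ (n + 1) k
    rw [eq_div_iff hn2]
    push_cast at h
    linear_combination h
  have h₂ : ((n + 2).choose (k + 1) : ℚ)
      = ((n + 2).choose k) * ((n : ℚ) + 2 - k) / ((k : ℚ) + 1) := by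
    rw [eq_div_iff hk1, Nat.cast_choose_succ_right_mul]
    push_cast
    ring
  rw [franelCertificate, franelCertificate, h₀, h₁, h₂]
  push_cast
  field_simp
  ring

theorem sum_range_choose_pow_eq_franel {n N : ℕ} (h : n + 1 ≤ N) :
    ∑ k ∈ range N, (n.choose k : ℚ) ^ 3 = franel n := by
  refine (sum_subset (range_subset_range.2 h) fun k _ hk => ?_).symm
  rw [Nat.choose_eq_zero_of_lt (by simpa using hk)]
  simp

theorem franel_recurrence (n : ℕ) :
    ((n : ℚ) + 2) ^ 2 * franel (n + 2) - (7 * (n : ℚ) ^ 2 + 21 * n + 16) * franel (n + 1)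
      - 8 * ((n : ℚ) + 1) ^ 2 * franel n = 0 := by
  rw [← sum_range_choose_pow_eq_franel (N := n + 3) le_rfl,
    ← sum_range_choose_pow_eq_franel (N := n + 3) (by omega),
    ← sum_range_choose_pow_eq_franel (N := n + 3) (by omega),
    mul_sum, mul_sum, mul_sum, ← sum_sub_distrib, ← sum_sub_distrib]
  simp only [franel_summand_telescopes]
  rw [sum_range_sub, franelCertificate_of_lt (by omega), franelCertificate_zero, sub_zero]

/-- The Franel numbers `u_m = Σ_{k=0}^m C(m,k)³` satisfy the Zagier-type recurrence
with `(A,B,λ) = (7,-8,2)`: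
`(m+1)² u_{m+1} - (7m² + 7m + 2) u_m - 8m² u_{m-1} = 0` for `m ≥ 1`, and `u_1 = 2 u_0`. -/
theorem stmt15 (u : ℕ → ℚ)
    (hu : ∀ m : ℕ, u m = ∑ k ∈ Finset.range (m + 1), (Nat.choose m k : ℚ) ^ 3) :
    (∀ m : ℕ, 1 ≤ m → ((m : ℚ) + 1) ^ 2 * u (m + 1)
      - (7 * (m : ℚ) ^ 2 + 7 * m + 2) * u m - 8 * (m : ℚ) ^ 2 * u (m - 1) = 0) ∧
    (1 : ℚ) ^ 2 * u 1 = 2 * u 0 := by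
  obtain rfl : u = franel := funext hu
  refine ⟨fun m hm => ?_, by norm_num [franel, sum_range_succ]⟩
  obtain ⟨n, rfl⟩ : ∃ n, m = n + 1 := ⟨m - 1, by omega⟩
  rw [Nat.add_sub_cancel]
  push_cast
  linear_combination franel_recurrence n
end
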